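/- arXiv:1601.04642 — 2 statements merged into one kernel-verified Lean document; each statement's English description precedes it below -/
import Mathlib

section
/- For every odd integer 2n+1 ≥ 3, the generalized Mycielskian M_m(C_{2n+1}) of an odd cycle is not 3-colorable for any m ≥ 1; equivalently every graph in the class K_4 of generalized Mycielski graphs obtained from odd cycles has chromatic number at least 4. -/
/-- The cycle on `ZMod m`, with `i` adjacent to `i ± 1`. -/
def cycleZMod (m : ℕ) : SimpleGraph (ZMod m) :=
  SimpleGraph.fromRel (fun i j => j = i + 1)

/-- The generalised Mycielskian (`n`-th cone) `M_n(G)`: the categorical product of `G`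
with the looped path `0,1,…,n` (loop at `0`), with all vertices at level `n`
identified to a single apex (`Sum.inr ()`). Levels `0,…,n-1` are `Sum.inl (u, i)`. -/
def Mycielskian {α : Type*} (G : SimpleGraph α) (n : ℕ) :
    SimpleGraph (α × Fin n ⊕ Unit) where
  Adj x y :=
    match x, y with
    | Sum.inl (u, i), Sum.inl (v, j) =>
        G.Adj u v ∧ ((i.val = 0 ∧ j.val = 0) ∨ i.val + 1 = j.val ∨ j.val + 1 = i.val)
    | Sum.inl (u, i), Sum.inr _ => i.val + 1 = n ∧ ∃ v, G.Adj u v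
    | Sum.inr _, Sum.inl (v, j) => j.val + 1 = n ∧ ∃ u, G.Adj v u
    | Sum.inr _, Sum.inr _ => False
  symm := by
    constructor
    rintro (⟨u, i⟩ | ⟨⟩) (⟨v, j⟩ | ⟨⟩) h
    · exact ⟨h.1.symm, by tauto⟩
    · exact h
    · exact h
    · exact h
  loopless := by
    constructor
    rintro (⟨u, i⟩ | ⟨⟩) h
    · exact G.irrefl h.1
    · exact h

/-!
Identify the three colours with the triangle `K₃` on `Fin 3`. A sequence of colours in which
consecutive entries differ moves by `±1` around the triangle at each step, and the sum of these
steps is its winding number, which has the parity of the number of steps. Colour the base level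
of `M_m(C)` along the odd cycle `C`, traversed twice: its winding number is twice an odd number,
so nonzero. The zigzag at height `r` runs along the cycle alternating between levels `r` and
`r + 1`; it is again properly coloured, and since two properly coloured paths of length two in
`K₃` with the same endpoints have the same winding number, all the zigzags, starting from the
doubled base cycle, have the same winding number. The zigzag at the top visits the apex at every
other step, so its winding number is `0`: a contradiction.
-/

open Finset Function

theorem sum_range_comp_add_of_periodic {M : Type*} [AddCancelCommMonoid M] {f : ℕ → M} {N : ℕ}
    (hf : Periodic f N) (p : ℕ) : ∑ t ∈ range N, f (t + p) = ∑ t ∈ range N, f t := by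
  induction p with
  | zero => rfl
  | succ p ih =>
    have h := (sum_range_succ' (f <| · + p) N).symm.trans (sum_range_succ (f <| · + p) N)
    rw [zero_add, add_comm N p, hf p, add_left_inj, ih] at h
    simpa only [add_right_comm _ 1 p, add_assoc] using h

theorem sum_range_two_mul {M : Type*} [AddCommMonoid M] (f : ℕ → M) (N : ℕ) :
    ∑ t ∈ range (2 * N), f t = ∑ s ∈ range N, (f (2 * s) + f (2 * s + 1)) := by
  induction N with
  | zero => simp
  | succ N ih =>
    rw [show 2 * (N + 1) = 2 * N + 1 + 1 by ring, sum_range_succ, sum_range_succ, ih,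
      sum_range_succ, add_assoc]

def windingStep (a b : Fin 3) : ℤ :=
  if b = a + 1 then 1 else if a = b + 1 then -1 else 0

theorem windingStep_add_windingStep_swap (a b : Fin 3) :
    windingStep a b + windingStep b a = 0 := by
  revert a b; decide

theorem windingStep_add_windingStep_eq {p q q' r : Fin 3} (hpq : p ≠ q) (hqr : q ≠ r)
    (hpq' : p ≠ q') (hq'r : q' ≠ r) :
    windingStep p q + windingStep q r = windingStep p q' + windingStep q' r := by
  revert p q q' r; decide

theorem windingStep_cast_zmod_two {a b : Fin 3} (h : a ≠ b) :
    (windingStep a b : ZMod 2) = 1 := by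
  revert a b; decide

def winding (w : ℕ → Fin 3) (N : ℕ) : ℤ :=
  ∑ t ∈ range N, windingStep (w t) (w (t + 1))

section Winding

variable {w w' : ℕ → Fin 3} {N : ℕ}

theorem winding_cast_zmod_two (hw : ∀ t, w t ≠ w (t + 1)) (N : ℕ) :
    (winding w N : ZMod 2) = N := by
  simp [winding, windingStep_cast_zmod_two (hw _)]

theorem winding_ne_zero_of_odd (hw : ∀ t, w t ≠ w (t + 1)) (hN : Odd N) :
    winding w N ≠ 0 := by
  intro h
  have h₂ := winding_cast_zmod_two hw N
  rw [h, Int.cast_zero, eq_comm, ZMod.natCast_eq_zero_iff_even] at h₂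
  exact Nat.not_even_iff_odd.mpr hN h₂

theorem winding_two_mul (hw : Periodic w N) : winding w (2 * N) = 2 * winding w N := by
  rw [winding, two_mul, sum_range_add, winding, two_mul]
  congr 1
  refine sum_congr rfl fun t _ => ?_
  rw [add_comm N t, hw, add_right_comm, hw]

theorem winding_comp_add (hw : Periodic w N) (p : ℕ) :
    winding (fun t => w (t + p)) N = winding w N := by
  have hstep : Periodic (fun t => windingStep (w t) (w (t + 1))) N := fun t => by
    dsimp only
    rw [hw t, add_right_comm, hw (t + 1)]
  simpa only [winding, add_right_comm _ p 1] using sum_range_comp_add_of_periodic hstep p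

theorem winding_two_mul_eq_sum_pairs (w : ℕ → Fin 3) (L : ℕ) :
    winding w (2 * L) = ∑ s ∈ range L,
      (windingStep (w (2 * s)) (w (2 * s + 1)) + windingStep (w (2 * s + 1)) (w (2 * s + 2))) :=
  sum_range_two_mul _ L

variable {L : ℕ}

theorem winding_eq_of_eq_of_even (hw : ∀ t, w t ≠ w (t + 1)) (hw' : ∀ t, w' t ≠ w' (t + 1))
    (h : ∀ s, w (2 * s) = w' (2 * s)) : winding w (2 * L) = winding w' (2 * L) := by
  rw [winding_two_mul_eq_sum_pairs, winding_two_mul_eq_sum_pairs]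
  refine sum_congr rfl fun s _ => ?_
  have h₂ : w (2 * s + 2) = w' (2 * s + 2) := h (s + 1)
  rw [windingStep_add_windingStep_eq (hw _) (hw _) (h s ▸ hw' _) (h₂ ▸ hw' _), h s, h₂]

theorem winding_eq_zero_of_const_of_even {a : Fin 3} (h : ∀ s, w (2 * s) = a) :
    winding w (2 * L) = 0 := by
  rw [winding_two_mul_eq_sum_pairs]
  refine sum_eq_zero fun s _ => ?_
  rw [h s, show 2 * s + 2 = 2 * (s + 1) by ring, h, windingStep_add_windingStep_swap]

theorem winding_eq_of_eq_of_mod_two (p : ℕ) (hw : Periodic w (2 * L)) (hw' : Periodic w' (2 * L))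
    (hw₁ : ∀ t, w t ≠ w (t + 1)) (hw₁' : ∀ t, w' t ≠ w' (t + 1))
    (h : ∀ t, t % 2 = p % 2 → w t = w' t) : winding w (2 * L) = winding w' (2 * L) := by
  rw [← winding_comp_add hw p, ← winding_comp_add hw' p]
  exact winding_eq_of_eq_of_even (fun t => by simpa [add_right_comm] using hw₁ (t + p))
    (fun t => by simpa [add_right_comm] using hw₁' (t + p)) (fun s => h _ (by omega))

theorem winding_eq_zero_of_const_of_mod_two (p : ℕ) (hw : Periodic w (2 * L)) {a : Fin 3}
    (h : ∀ t, t % 2 = p % 2 → w t = a) : winding w (2 * L) = 0 := by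
  rw [← winding_comp_add hw p]
  exact winding_eq_zero_of_const_of_even (fun s => h _ (by omega))

end Winding

/-- At step `t` the zigzag is at height `r` or `r + 1` according to the parity of `t + r`, so
that the zigzags at heights `r` and `r + 1` agree at every other step. -/
def zigzag (col : ℕ → ℕ → Fin 3) (r t : ℕ) : Fin 3 :=
  col t (r + (t + r) % 2)

section Zigzag

variable {col : ℕ → ℕ → Fin 3} {L m : ℕ}

theorem zigzag_periodic (hper : ∀ j, Periodic (col · j) L) (r : ℕ) :
    Periodic (zigzag col r) (2 * L) := fun t => by
  simp only [zigzag, show (t + 2 * L + r) % 2 = (t + r) % 2 by omega]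
  exact (hper _).nat_mul 2 t

theorem zigzag_ne_succ (hdiag : ∀ k j, j < m → col k j ≠ col (k + 1) (j + 1) ∧
      col (k + 1) j ≠ col k (j + 1)) {r : ℕ} (hr : r < m) (t : ℕ) :
    zigzag col r t ≠ zigzag col r (t + 1) := by
  rcases Nat.mod_two_eq_zero_or_one (t + r) with h | h
  · simp only [zigzag, h, show (t + 1 + r) % 2 = 1 by omega]
    exact (hdiag t r hr).1
  · simp only [zigzag, h, show (t + 1 + r) % 2 = 0 by omega]
    exact (hdiag t r hr).2.symm

theorem winding_zigzag_eq_winding_zigzag_zero (hper : ∀ j, Periodic (col · j) L)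
    (hdiag : ∀ k j, j < m → col k j ≠ col (k + 1) (j + 1) ∧ col (k + 1) j ≠ col k (j + 1))
    {r : ℕ} (hr : r < m) : winding (zigzag col r) (2 * L) = winding (zigzag col 0) (2 * L) := by
  induction r with
  | zero => rfl
  | succ r ih =>
    rw [← ih (by omega)]
    refine winding_eq_of_eq_of_mod_two (r + 1) (zigzag_periodic hper _) (zigzag_periodic hper _)
      (zigzag_ne_succ hdiag hr) (zigzag_ne_succ hdiag (by omega)) fun t ht => ?_
    simp only [zigzag, show (t + (r + 1)) % 2 = 0 by omega, show (t + r) % 2 = 1 by omega]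

theorem winding_zigzag_zero (hbase : ∀ k, col k 0 ≠ col (k + 1) 0)
    (hdiag : ∀ k j, j < m → col k j ≠ col (k + 1) (j + 1) ∧ col (k + 1) j ≠ col k (j + 1))
    (hm : 0 < m) : winding (zigzag col 0) (2 * L) = winding (col · 0) (2 * L) :=
  winding_eq_of_eq_of_even (zigzag_ne_succ hdiag hm) hbase fun s => by simp [zigzag]

theorem winding_zigzag_top (hper : ∀ j, Periodic (col · j) L) (hapex : ∀ k, col k m = col 0 m)
    (hm : 0 < m) : winding (zigzag col (m - 1)) (2 * L) = 0 :=
  winding_eq_zero_of_const_of_mod_two m (zigzag_periodic hper _) fun t ht => by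
    rw [zigzag, show m - 1 + (t + (m - 1)) % 2 = m by omega, hapex]

theorem winding_base_eq_zero (hper : ∀ j, Periodic (col · j) L)
    (hbase : ∀ k, col k 0 ≠ col (k + 1) 0)
    (hdiag : ∀ k j, j < m → col k j ≠ col (k + 1) (j + 1) ∧ col (k + 1) j ≠ col k (j + 1))
    (hapex : ∀ k, col k m = col 0 m) (hm : 0 < m) : winding (col · 0) L = 0 := by
  have h : 2 * winding (col · 0) L = 0 := calc
    2 * winding (col · 0) L = winding (col · 0) (2 * L) := (winding_two_mul (hper 0)).symm
    _ = winding (zigzag col (m - 1)) (2 * L) := by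
      rw [winding_zigzag_eq_winding_zigzag_zero hper hdiag (by omega : m - 1 < m),
        winding_zigzag_zero hbase hdiag hm]
    _ = 0 := winding_zigzag_top hper hapex hm
  omega

end Zigzag

namespace Mycielskian

variable {α : Type*} {G : SimpleGraph α} {m : ℕ}

/-- The vertex `(a, j)` of `M_m(G)`; all heights `j ≥ m` give the apex. -/
def vertex (m : ℕ) (a : α) (j : ℕ) : α × Fin m ⊕ Unit :=
  if h : j < m then .inl (a, ⟨j, h⟩) else .inr ()

theorem vertex_self (a : α) : vertex m a m = .inr () := by
  simp [vertex]

theorem adj_vertex_zero {a b : α} (hab : G.Adj a b) (hm : 0 < m) :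
    (Mycielskian G m).Adj (vertex m a 0) (vertex m b 0) := by
  simp only [vertex, dif_pos hm]
  exact ⟨hab, Or.inl ⟨rfl, rfl⟩⟩

theorem adj_vertex_succ {a b : α} (hab : G.Adj a b) {j : ℕ} (hj : j < m) :
    (Mycielskian G m).Adj (vertex m a j) (vertex m b (j + 1)) := by
  by_cases hj' : j + 1 < m
  · simp only [vertex, dif_pos hj, dif_pos hj']
    exact ⟨hab, Or.inr (Or.inl rfl)⟩
  · simp only [vertex, dif_pos hj, dif_neg hj']
    exact ⟨show j + 1 = m by omega, b, hab⟩

theorem not_colorable_three_of_periodic_adj {L : ℕ} (hL : Odd L) (hm : 0 < m) {u : ℕ → α}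
    (hu : Periodic u L) (hadj : ∀ k, G.Adj (u k) (u (k + 1))) :
    ¬ (Mycielskian G m).Colorable 3 := by
  rintro ⟨C⟩
  set col : ℕ → ℕ → Fin 3 := fun k j => C (vertex m (u k) j)
  have hbase : ∀ k, col k 0 ≠ col (k + 1) 0 := fun k => C.valid (adj_vertex_zero (hadj k) hm)
  refine winding_ne_zero_of_odd hbase hL (winding_base_eq_zero (m := m) (fun j k => ?_) hbase
    (fun k j hj => ⟨C.valid (adj_vertex_succ (hadj k) hj),
      C.valid (adj_vertex_succ (hadj k).symm hj)⟩) (fun k => ?_) hm)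
  · simp only [col, hu k]
  · simp only [col, vertex_self]

end Mycielskian

theorem cycleZMod_adj_add_one {L : ℕ} (hL : 1 < L) (k : ZMod L) :
    (cycleZMod L).Adj k (k + 1) := by
  have : Fact (1 < L) := ⟨hL⟩
  simp [cycleZMod]

theorem stmt10 (n m : ℕ) (hn : 1 ≤ n) (hm : 1 ≤ m) :
    ¬ (Mycielskian (cycleZMod (2 * n + 1)) m).Colorable 3 ∧
      4 ≤ (Mycielskian (cycleZMod (2 * n + 1)) m).chromaticNumber := by
  have hnot : ¬ (Mycielskian (cycleZMod (2 * n + 1)) m).Colorable 3 :=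
    Mycielskian.not_colorable_three_of_periodic_adj (odd_two_mul_add_one n) hm
      (u := fun k : ℕ => (k : ZMod (2 * n + 1))) (fun k => by simp)
      fun k => by simpa using cycleZMod_adj_add_one (by omega) (k : ZMod (2 * n + 1))
  refine ⟨hnot, SimpleGraph.le_chromaticNumber_iff_colorable.mpr fun k hk => ?_⟩
  by_contra hk4
  norm_cast at hk4
  exact hnot (hk.mono (by omega))
end

section
/- For any graph G and any m ≥ 1, there is a graph homomorphism from M_m(G) to H if and only if there is a walk of length m in the exponential graph H^G from a looped vertex (a homomorphism G → H) to a constant map. -/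
/-- Adjacency in the exponential graph `H^G`. -/
def expAdj {α β : Type*} (G : SimpleGraph α) (H : SimpleGraph β)
    (f g : α → β) : Prop :=
  ∀ u v, G.Adj u v → H.Adj (f u) (g v)

/-! A homomorphism `φ : M_m(G) → H` is the same thing as its sequence of level maps
`u ↦ φ (u, k)`: the loop at level `0` makes the level-`0` map a looped vertex of `H^G`, the
edges between consecutive levels make consecutive level maps adjacent in `H^G`, and the apex
is the constant map at level `m`. Conversely such a walk glues to a homomorphism. -/

section

variable {α β : Type*} {G : SimpleGraph α} {H : SimpleGraph β}

theorem expAdj.symm {f g : α → β} (h : expAdj G H f g) : expAdj G H g f :=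
  fun u v huv => (h v u huv.symm).symm

namespace Mycielskian

variable {m : ℕ}

def levelMap (φ : Mycielskian G m →g H) (k : ℕ) (u : α) : β :=
  if h : k < m then φ (Sum.inl (u, ⟨k, h⟩)) else φ (Sum.inr ())

theorem levelMap_of_le (φ : Mycielskian G m →g H) {k : ℕ} (hk : m ≤ k) :
    levelMap φ k = fun _ => φ (Sum.inr ()) := by
  funext u
  simp [levelMap, Nat.not_lt.mpr hk]

theorem expAdj_levelMap_zero (φ : Mycielskian G m →g H) (hm : 0 < m) :
    expAdj G H (levelMap φ 0) (levelMap φ 0) := by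
  intro u v huv
  simp only [levelMap, dif_pos hm]
  exact φ.map_adj (show (Mycielskian G m).Adj (Sum.inl (u, ⟨0, hm⟩)) (Sum.inl (v, ⟨0, hm⟩))
    from ⟨huv, Or.inl ⟨rfl, rfl⟩⟩)

theorem expAdj_levelMap_succ (φ : Mycielskian G m →g H) {k : ℕ} (hk : k < m) :
    expAdj G H (levelMap φ k) (levelMap φ (k + 1)) := by
  intro u v huv
  by_cases hk' : k + 1 < m
  · simp only [levelMap, dif_pos hk, dif_pos hk']
    exact φ.map_adj (show (Mycielskian G m).Adj (Sum.inl (u, ⟨k, hk⟩)) (Sum.inl (v, ⟨k + 1, hk'⟩))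
      from ⟨huv, Or.inr (Or.inl rfl)⟩)
  · rw [levelMap_of_le φ (Nat.not_lt.mp hk')]
    simp only [levelMap, dif_pos hk]
    exact φ.map_adj (show (Mycielskian G m).Adj (Sum.inl (u, ⟨k, hk⟩)) (Sum.inr ())
      from ⟨le_antisymm hk (Nat.not_lt.mp hk'), v, huv⟩)

def homOfWalk (w : ℕ → α → β) (c : β) (hloop : expAdj G H (w 0) (w 0))
    (hstep : ∀ k < m, expAdj G H (w k) (w (k + 1))) (hend : w m = fun _ => c) :
    Mycielskian G m →g H where
  toFun
    | Sum.inl (u, i) => w i u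
    | Sum.inr _ => c
  map_rel' := by
    have hlast : ∀ i : Fin m, i.val + 1 = m → expAdj G H (w i) fun _ => c := by
      rintro i hi
      simpa only [hi, hend] using hstep i i.isLt
    rintro (⟨u, i⟩ | ⟨⟩) (⟨v, j⟩ | ⟨⟩) h
    · obtain ⟨huv, ⟨hi, hj⟩ | hij | hji⟩ := h
      · simpa only [hi, hj] using hloop u v huv
      · simpa only [← hij] using hstep i i.isLt u v huv
      · simpa only [← hji] using (hstep j j.isLt).symm u v huv
    · obtain ⟨hi, v, huv⟩ := h
      exact hlast i hi u v huv
    · obtain ⟨hj, u, hvu⟩ := h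
      exact (hlast j hj v u hvu).symm
    · exact h.elim

end Mycielskian

end

theorem stmt11 {α β : Type*} (G : SimpleGraph α) (H : SimpleGraph β)
    (m : ℕ) (hm : 1 ≤ m) :
    Nonempty (Mycielskian G m →g H) ↔
      ∃ w : ℕ → α → β, expAdj G H (w 0) (w 0) ∧
        (∀ k < m, expAdj G H (w k) (w (k + 1))) ∧ ∃ c, w m = fun _ => c := by
  constructor
  · rintro ⟨φ⟩
    exact ⟨Mycielskian.levelMap φ, Mycielskian.expAdj_levelMap_zero φ hm,
      fun k hk => Mycielskian.expAdj_levelMap_succ φ hk, _,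
      Mycielskian.levelMap_of_le φ le_rfl⟩
  · rintro ⟨w, hloop, hstep, c, hend⟩
    exact ⟨Mycielskian.homOfWalk w c hloop hstep hend⟩
end
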